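/- With all definitions as in the graph mosaic enumeration algorithm, the total number of graph (3,3)-mosaics is D^{(3,3)}_G = Σ_{i,j=1}^{4} L_{b(i,j)} x_{ij} = 71, where (x_{ij}) = N̂^{(1,1)} is the 4×4 magnified state matrix for m = n = 1. -/
import Mathlib


open Matrix Kronecker

/-- Assemble four `2^k × 2^k` blocks into a `2^(k+1) × 2^(k+1)` matrix. -/
def blk {k : ℕ} (A B C D : Matrix (Fin (2^k)) (Fin (2^k)) ℤ) :
    Matrix (Fin (2^(k+1))) (Fin (2^(k+1))) ℤ :=
  Matrix.reindex (finSumFinEquiv.trans (finCongr (by rw [pow_succ]; omega)))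
    (finSumFinEquiv.trans (finCongr (by rw [pow_succ]; omega)))
    (Matrix.fromBlocks A B C D)

/-- The four state matrices `(X_k^+, X_k^-, O_k^+, O_k^-)`. -/
def SM : (k : ℕ) → (Matrix (Fin (2^k)) (Fin (2^k)) ℤ) × (Matrix (Fin (2^k)) (Fin (2^k)) ℤ) ×
    (Matrix (Fin (2^k)) (Fin (2^k)) ℤ) × (Matrix (Fin (2^k)) (Fin (2^k)) ℤ)
  | 0 => (1, 0, 1, 0)
  | k+1 =>
    let Xp := (SM k).1
    let Xm := (SM k).2.1
    let Op := (SM k).2.2.1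
    let Om := (SM k).2.2.2
    (blk Xp Om Om (Xp + Om),
     blk Xm Op Op (Xm + Op),
     blk Op (Xm + Op) (Xm + Op) (Xm + (5:ℤ) • Op),
     blk Om (Xp + Om) (Xp + Om) (Xp + (5:ℤ) • Om))

def Xp (k : ℕ) : Matrix (Fin (2^k)) (Fin (2^k)) ℤ := (SM k).1
def Xm (k : ℕ) : Matrix (Fin (2^k)) (Fin (2^k)) ℤ := (SM k).2.1
def Op (k : ℕ) : Matrix (Fin (2^k)) (Fin (2^k)) ℤ := (SM k).2.2.1
def Om (k : ℕ) : Matrix (Fin (2^k)) (Fin (2^k)) ℤ := (SM k).2.2.2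

/-- Kronecker product of the `2^k × 2^k` identity with a `2^m × 2^m` matrix,
reindexed as a `2^(m+k) × 2^(m+k)` matrix. -/
def kr (k m : ℕ) (M : Matrix (Fin (2^m)) (Fin (2^m)) ℤ) :
    Matrix (Fin (2^(m+k))) (Fin (2^(m+k))) ℤ :=
  Matrix.reindex (finProdFinEquiv.trans (finCongr (by ring)))
    (finProdFinEquiv.trans (finCongr (by ring)))
    ((1 : Matrix (Fin (2^k)) (Fin (2^k)) ℤ) ⊗ₖ M)

/-- The magnified state matrix `N̂^{(m,n)}`. -/
def Nhat (m : ℕ) : (n : ℕ) → Matrix (Fin (2^(m+n))) (Fin (2^(m+n))) ℤ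
  | 0 => 1
  | n+1 => blk (Nhat m n * kr n m (Xp m)) (Nhat m n * kr n m (Om m))
               (Nhat m n * kr n m (Xm m)) (Nhat m n * kr n m (Op m))

/-- Lucas numbers. -/
def Lucas : ℕ → ℕ
  | 0 => 2
  | 1 => 1
  | n+2 => Lucas (n+1) + Lucas n

/-- Hamming weight. -/
def hw (n : ℕ) : ℕ := (Nat.bits n).count true


lemma hw0 : hw 0 = 0 := by simp [hw]
lemma hw1 : hw 1 = 1 := by simp [hw, Nat.bits]
lemma hw2 : hw 2 = 1 := by
  rw [hw, show (2:ℕ) = 2*1 by norm_num, Nat.bit0_bits _ one_ne_zero,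
    show (1:ℕ).bits = [true] from Nat.one_bits]; rfl
lemma hw3 : hw 3 = 2 := by
  rw [hw, show (3:ℕ) = 2*1+1 by norm_num, Nat.bit1_bits,
    show (1:ℕ).bits = [true] from Nat.one_bits]; rfl

theorem graph_mosaics_3_3 :
    ∑ i : Fin (2 ^ (1 + 1)), ∑ j : Fin (2 ^ (1 + 1)),
      (Lucas (hw i.val + hw j.val) : ℤ) * Nhat 1 1 i j = 71 := by
  show ∑ i : Fin 4, ∑ j : Fin 4, _ = _
  simp only [Fin.sum_univ_four]
  simp only [show ((3 : Fin 4) : ℕ) = 3 from rfl]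
  norm_num [hw0, hw1, hw2, hw3]
  decide
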